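/- Let R be a commutative ring and λ : ℚ_p^× → (R,+) a locally constant group homomorphism into the additive group of R. Let I(R) be the R-module of locally constant functions f : GL₃(ℚ_p) → R with f(qg) = f(g) for all q ∈ P̄₁(ℚ_p), and let I(τ_λ) be the R-module of locally constant functions f = (f₁,f₂) : GL₃(ℚ_p) → R ⊕ R satisfying f₁(qg) = f₁(g) + λ(v₁(q))·f₂(g) and f₂(qg) = f₂(g) for all q ∈ P̄₁(ℚ_p). Define j₁ : I(R) → I(τ_λ) by j₁(F) = (F, 0) and j₂ : I(τ_λ) → I(R) by j₂(f₁,f₂) = f₂. Then the sequence 0 → I(R) → I(τ_λ) → I(R) → 0 is exact: j₁ is injective, the kernel of j₂ equals the image of j₁, and j₂ is surjective. Moreover j₁ and j₂ commute with the right-translation action of GL₃(ℚ_p) on these function spaces. -/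

import Mathlib

open Matrix

noncomputable section

/-- `GL₃(ℚ_p)`, realised as the units of the matrix ring, with its natural topology. -/
abbrev GL3Qp (p : ℕ) [Fact p.Prime] := (Matrix (Fin 3) (Fin 3) ℚ_[p])ˣ

/-- `P̄₁(ℚ_p) = {g ∈ GL₃(ℚ_p) : g₁₂ = g₁₃ = 0}`. -/
def P1barU (p : ℕ) [Fact p.Prime] : Set (GL3Qp p) :=
  {q | Units.val q 0 1 = 0 ∧ Units.val q 0 2 = 0}

/-- The character `v₁ : P̄₁(ℚ_p) → ℚ_p^×`, `v₁(q) = q₁₁⁻¹·(q₂₂q₃₃ − q₂₃q₃₂)`. -/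
def v1U (p : ℕ) [Fact p.Prime] (q : GL3Qp p) : ℚ_[p] :=
  (Units.val q 0 0)⁻¹ * (Units.val q 1 1 * Units.val q 2 2 - Units.val q 1 2 * Units.val q 2 1)

/-- Membership in `I(R)`: locally constant functions on `GL₃(ℚ_p)`, left-invariant
under `P̄₁(ℚ_p)`. -/
def memIndR (p : ℕ) [Fact p.Prime] {R : Type*} [CommRing R] (F : GL3Qp p → R) : Prop :=
  IsLocallyConstant F ∧ ∀ q ∈ P1barU p, ∀ g : GL3Qp p, F (q * g) = F g

/-- Membership in `I(τ_λ)`: pairs `(f₁, f₂)` of locally constant functions with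
`f₁(qg) = f₁(g) + λ(v₁(q))·f₂(g)` and `f₂(qg) = f₂(g)` for `q ∈ P̄₁(ℚ_p)`. -/
def memIndTau (p : ℕ) [Fact p.Prime] {R : Type*} [CommRing R] (lam : ℚ_[p] → R)
    (f₁ f₂ : GL3Qp p → R) : Prop :=
  IsLocallyConstant f₁ ∧ IsLocallyConstant f₂ ∧
  ∀ q ∈ P1barU p, ∀ g : GL3Qp p,
    f₁ (q * g) = f₁ g + lam (v1U p q) * f₂ g ∧ f₂ (q * g) = f₂ g

section Aux
variable {p : ℕ} [Fact p.Prime]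

/-- index of a maximal-norm coordinate -/
def pickIdx (v : Fin 3 → ℚ_[p]) : Fin 3 :=
  if ‖v 1‖ ≤ ‖v 0‖ ∧ ‖v 2‖ ≤ ‖v 0‖ then 0 else if ‖v 2‖ ≤ ‖v 1‖ then 1 else 2

lemma pick_max (v : Fin 3 → ℚ_[p]) (i : Fin 3) : ‖v i‖ ≤ ‖v (pickIdx v)‖ := by
  unfold pickIdx
  split_ifs with h1 h2
  · fin_cases i
    · exact le_refl _
    · exact h1.1
    · exact h1.2
  · push_neg at h1
    fin_cases i
    · rcases le_or_gt ‖v 0‖ ‖v 1‖ with hl | hl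
      · exact hl
      · have := h1 hl.le
        linarith
    · exact le_refl _
    · exact h2
  · push_neg at h1 h2
    fin_cases i
    · show ‖v 0‖ ≤ ‖v 2‖
      rcases le_or_gt ‖v 1‖ ‖v 0‖ with hl | hl
      · exact (h1 hl).le
      · linarith
    · exact h2.le
    · exact le_refl _

lemma pick_ne_zero {v : Fin 3 → ℚ_[p]} (hv : v ≠ 0) : v (pickIdx v) ≠ 0 := by
  obtain ⟨i, hi⟩ := Function.ne_iff.mp hv
  have := pick_max v i
  have : 0 < ‖v (pickIdx v)‖ := lt_of_lt_of_le (norm_pos_iff.mpr hi) this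
  exact norm_pos_iff.mp this

lemma pick_smul {c : ℚ_[p]} (hc : c ≠ 0) (v : Fin 3 → ℚ_[p]) :
    pickIdx (fun i => c * v i) = pickIdx v := by
  have hcpos : 0 < ‖c‖ := norm_pos_iff.mpr hc
  unfold pickIdx
  simp only [norm_mul, mul_le_mul_iff_right₀ hcpos]

lemma pick_near {v w : Fin 3 → ℚ_[p]} (hv : v ≠ 0)
    (h : ∀ i, ‖w i - v i‖ < ‖v (pickIdx v)‖) : pickIdx w = pickIdx v := by
  set j := pickIdx v with hj
  set M := ‖v j‖ with hM
  have hmax : ∀ i, ‖v i‖ ≤ M := pick_max v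
  have hA : ∀ i, ‖v i‖ = M → ‖w i‖ = M := by
    intro i hi
    have h1 : ‖w i‖ ≤ M := by
      calc ‖w i‖ = ‖v i + (w i - v i)‖ := by ring_nf
        _ ≤ max ‖v i‖ ‖w i - v i‖ := Padic.nonarchimedean _ _
        _ ≤ M := max_le (hmax i) (le_of_lt (h i))
    have h2 : M ≤ ‖w i‖ := by
      by_contra hlt
      push_neg at hlt
      have : ‖v i‖ ≤ max ‖w i‖ ‖v i - w i‖ := by
        calc ‖v i‖ = ‖w i + (v i - w i)‖ := by ring_nf
          _ ≤ max ‖w i‖ ‖v i - w i‖ := Padic.nonarchimedean _ _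
      rw [hi] at this
      have h3 : ‖v i - w i‖ < M := by rw [← norm_neg]; simpa using h i
      exact absurd this (by simp [not_le]; exact ⟨hlt, h3⟩)
    linarith
  have hB : ∀ i, ‖w i‖ ≤ M := by
    intro i
    calc ‖w i‖ = ‖v i + (w i - v i)‖ := by ring_nf
      _ ≤ max ‖v i‖ ‖w i - v i‖ := Padic.nonarchimedean _ _
      _ ≤ M := max_le (hmax i) (le_of_lt (h i))
  have hC : ∀ i, ‖v i‖ < M → ‖w i‖ < M := by
    intro i hi
    calc ‖w i‖ = ‖v i + (w i - v i)‖ := by ring_nf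
      _ ≤ max ‖v i‖ ‖w i - v i‖ := Padic.nonarchimedean _ _
      _ < M := max_lt hi (h i)
  have hwj : ‖w j‖ = M := hA j rfl
  unfold pickIdx at hj ⊢
  split_ifs at hj with h1 h2
  · -- j = 0
    rw [hj] at hwj
    have w1 : ‖w 1‖ ≤ ‖w 0‖ := by rw [hwj]; exact hB 1
    have w2 : ‖w 2‖ ≤ ‖w 0‖ := by rw [hwj]; exact hB 2
    rw [if_pos ⟨w1, w2⟩, hj]
  · -- j = 1
    rw [hj] at hwj
    push_neg at h1
    have hv0 : ‖v 0‖ < M := by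
      rcases lt_or_ge ‖v 0‖ ‖v 1‖ with hl | hl
      · exact lt_of_lt_of_le hl (hmax 1)
      · exact lt_of_lt_of_le (h1 hl) (hmax 2)
    have hw0 : ‖w 0‖ < M := hC 0 hv0
    have c1 : ¬(‖w 1‖ ≤ ‖w 0‖ ∧ ‖w 2‖ ≤ ‖w 0‖) := by
      rintro ⟨ha, -⟩; rw [hwj] at ha; linarith
    rw [if_neg c1, if_pos (by rw [hwj]; exact hB 2), hj]
  · -- j = 2
    rw [hj] at hwj
    push_neg at h1 h2
    have hv1 : ‖v 1‖ < M := lt_of_lt_of_le h2 (hmax 2)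
    have hv0 : ‖v 0‖ < M := by
      rcases lt_or_ge ‖v 0‖ ‖v 1‖ with hl | hl
      · linarith
      · exact lt_of_lt_of_le (h1 hl) (hmax 2)
    have hw0 : ‖w 0‖ < M := hC 0 hv0
    have hw1 : ‖w 1‖ < M := hC 1 hv1
    have c1 : ¬(‖w 1‖ ≤ ‖w 0‖ ∧ ‖w 2‖ ≤ ‖w 0‖) := by
      rintro ⟨-, hb⟩; rw [hwj] at hb; linarith
    have c2 : ¬(‖w 2‖ ≤ ‖w 1‖) := by rw [hwj]; linarith
    rw [if_neg c1, if_neg c2, hj]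

end Aux

section Main
variable {p : ℕ} [Fact p.Prime] {R : Type*} [CommRing R]

lemma det_ne_zero' (g : GL3Qp p) : (g.val).det ≠ 0 := by
  have h : g.val.det * ((↑g⁻¹ : Matrix (Fin 3) (Fin 3) ℚ_[p])).det = 1 := by
    rw [← Matrix.det_mul, Units.mul_inv, Matrix.det_one]
  exact left_ne_zero_of_mul_eq_one h

lemma row_ne_zero' (g : GL3Qp p) : g.val 0 ≠ 0 := by
  intro h
  exact det_ne_zero' g (Matrix.det_eq_zero_of_row_eq_zero 0 (fun j => congrFun h j))

lemma P1_det {q : GL3Qp p} (hq : q ∈ P1barU p) :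
    q.val.det = q.val 0 0 * (q.val 1 1 * q.val 2 2 - q.val 1 2 * q.val 2 1) := by
  obtain ⟨h1, h2⟩ := hq
  rw [Matrix.det_fin_three]
  change Units.val q 0 1 = 0 at h1
  change Units.val q 0 2 = 0 at h2
  rw [h1, h2]
  ring

lemma P1_ne {q : GL3Qp p} (hq : q ∈ P1barU p) :
    q.val 0 0 ≠ 0 ∧ (q.val 1 1 * q.val 2 2 - q.val 1 2 * q.val 2 1) ≠ 0 := by
  have h := P1_det hq
  have hd := det_ne_zero' q
  rw [h] at hd
  exact ⟨left_ne_zero_of_mul hd, right_ne_zero_of_mul hd⟩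

lemma row_mul' {q g : GL3Qp p} (hq : q ∈ P1barU p) :
    (q * g).val 0 = fun k => q.val 0 0 * g.val 0 k := by
  funext k
  rw [Units.val_mul, Matrix.mul_apply, Fin.sum_univ_three]
  have h1 : q.val 0 1 = 0 := hq.1
  have h2 : q.val 0 2 = 0 := hq.2
  rw [h1, h2]
  ring

variable (lam : ℚ_[p] → R)

lemma lam_one (hadd : ∀ x y : ℚ_[p], x ≠ 0 → y ≠ 0 → lam (x * y) = lam x + lam y) :
    lam 1 = 0 := by
  have h := hadd 1 1 one_ne_zero one_ne_zero
  rw [mul_one] at h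
  exact (left_eq_add.mp h)

lemma lam_inv (hadd : ∀ x y : ℚ_[p], x ≠ 0 → y ≠ 0 → lam (x * y) = lam x + lam y)
    {x : ℚ_[p]} (hx : x ≠ 0) : lam x⁻¹ = - lam x := by
  have h := hadd x x⁻¹ hx (inv_ne_zero hx)
  rw [mul_inv_cancel₀ hx, lam_one lam hadd] at h
  exact eq_neg_of_add_eq_zero_right h.symm

/-- `μ` applied to the first row. -/
def muRow (g : GL3Qp p) : R := lam (g.val 0 (pickIdx (g.val 0)))

lemma muRow_mul (hadd : ∀ x y : ℚ_[p], x ≠ 0 → y ≠ 0 → lam (x * y) = lam x + lam y)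
    {q g : GL3Qp p} (hq : q ∈ P1barU p) :
    muRow lam (q * g) = lam (q.val 0 0) + muRow lam g := by
  have hrow := row_mul' (g := g) hq
  have h00 := (P1_ne hq).1
  have hg0 := row_ne_zero' g
  unfold muRow
  rw [hrow, pick_smul h00]
  exact hadd _ _ h00 (pick_ne_zero hg0)

/-- the cocycle function `φ(g) = λ(det g) - 2 μ(first row of g)`. -/
def phiFun (g : GL3Qp p) : R := lam (g.val.det) - (muRow lam g + muRow lam g)

lemma phiFun_cocycle (hadd : ∀ x y : ℚ_[p], x ≠ 0 → y ≠ 0 → lam (x * y) = lam x + lam y)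
    {q g : GL3Qp p} (hq : q ∈ P1barU p) :
    phiFun lam (q * g) = phiFun lam g + lam (v1U p q) := by
  obtain ⟨h00, hm⟩ := P1_ne hq
  have hdetmul : (q * g).val.det = q.val.det * g.val.det := by
    rw [Units.val_mul, Matrix.det_mul]
  have hlamdet : lam ((q * g).val.det) = lam (q.val.det) + lam (g.val.det) := by
    rw [hdetmul]; exact hadd _ _ (det_ne_zero' q) (det_ne_zero' g)
  have hdetq : lam (q.val.det) = lam (q.val 0 0) + lam (q.val 1 1 * q.val 2 2 - q.val 1 2 * q.val 2 1) := by
    rw [P1_det hq]; exact hadd _ _ h00 hm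
  have hv1 : lam (v1U p q) = - lam (q.val 0 0) + lam (q.val 1 1 * q.val 2 2 - q.val 1 2 * q.val 2 1) := by
    unfold v1U
    rw [hadd _ _ (inv_ne_zero h00) hm, lam_inv lam hadd h00]
  unfold phiFun
  rw [muRow_mul lam hadd hq, hlamdet, hdetq, hv1]
  ring

end Main

section Main2
variable {p : ℕ} [Fact p.Prime] {R : Type*} [CommRing R] (lam : ℚ_[p] → R)

lemma lc_lamdet (hlc : ∀ x : ℚ_[p], x ≠ 0 → ∃ U ∈ nhds x, ∀ y ∈ U, lam y = lam x) :
    IsLocallyConstant (fun g : GL3Qp p => lam (g.val.det)) := by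
  rw [IsLocallyConstant.iff_eventually_eq]
  intro g₀
  obtain ⟨U, hU, hUc⟩ := hlc _ (det_ne_zero' g₀)
  have hmem : (fun g : GL3Qp p => (g.val).det) ⁻¹' U ∈ nhds g₀ :=
    (Units.continuous_val.matrix_det).continuousAt hU
  exact Filter.eventually_of_mem hmem fun g hg => hUc _ hg

lemma lc_muRow (hlc : ∀ x : ℚ_[p], x ≠ 0 → ∃ U ∈ nhds x, ∀ y ∈ U, lam y = lam x) :
    IsLocallyConstant (muRow lam : GL3Qp p → R) := by
  rw [IsLocallyConstant.iff_eventually_eq]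
  intro g₀
  set v : Fin 3 → ℚ_[p] := g₀.val 0 with hv
  have hvne : v ≠ 0 := row_ne_zero' g₀
  set j := pickIdx v with hjdef
  have hM : 0 < ‖v j‖ := norm_pos_iff.mpr (pick_ne_zero hvne)
  obtain ⟨U, hU, hUc⟩ := hlc (v j) (pick_ne_zero hvne)
  have E1 : ∀ᶠ g : GL3Qp p in nhds g₀, ∀ i, ‖g.val 0 i - v i‖ < ‖v j‖ := by
    rw [Filter.eventually_all]
    intro i
    have hcont : Continuous fun g : GL3Qp p => ‖g.val 0 i - v i‖ :=
      ((Units.continuous_val.matrix_elem 0 i).sub continuous_const).norm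
    have hopen : IsOpen {g : GL3Qp p | ‖g.val 0 i - v i‖ < ‖v j‖} :=
      isOpen_lt hcont continuous_const
    have hmem : g₀ ∈ {g : GL3Qp p | ‖g.val 0 i - v i‖ < ‖v j‖} := by
      simp only [Set.mem_setOf_eq, ← hv, sub_self, norm_zero]
      exact hM
    exact Filter.eventually_of_mem (hopen.mem_nhds hmem) fun g hg => hg
  have E2 : ∀ᶠ g : GL3Qp p in nhds g₀, g.val 0 j ∈ U :=
    (Units.continuous_val.matrix_elem 0 j).continuousAt hU
  filter_upwards [E1, E2] with g h1 h2
  show lam (g.val 0 (pickIdx (g.val 0))) = lam (g₀.val 0 (pickIdx (g₀.val 0)))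
  rw [show pickIdx (g.val 0) = j from pick_near hvne h1]
  exact hUc _ h2

lemma lc_phiFun (hlc : ∀ x : ℚ_[p], x ≠ 0 → ∃ U ∈ nhds x, ∀ y ∈ U, lam y = lam x) :
    IsLocallyConstant (phiFun lam : GL3Qp p → R) :=
  (lc_lamdet lam hlc).sub ((lc_muRow lam hlc).add (lc_muRow lam hlc))

end Main2

/-- The sequence `0 → I(R) → I(τ_λ) → I(R) → 0`, with `j₁(F) = (F,0)` and
`j₂(f₁,f₂) = f₂`, is exact and `GL₃(ℚ_p)`-equivariant for right translation. -/
theorem statement8 (p : ℕ) [Fact p.Prime] {R : Type*} [CommRing R]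
    (lam : ℚ_[p] → R)
    (hadd : ∀ x y : ℚ_[p], x ≠ 0 → y ≠ 0 → lam (x * y) = lam x + lam y)
    (hlc : ∀ x : ℚ_[p], x ≠ 0 → ∃ U ∈ nhds x, ∀ y ∈ U, lam y = lam x) :
    -- j₁ is injective
    (Function.Injective fun F : GL3Qp p → R => (F, (0 : GL3Qp p → R))) ∧
    -- j₁ lands in I(τ_λ): the image of j₁ is contained in the kernel of j₂
    (∀ F : GL3Qp p → R, memIndR p F → memIndTau p lam F 0) ∧
    -- j₂ maps I(τ_λ) to I(R)
    (∀ f₁ f₂ : GL3Qp p → R, memIndTau p lam f₁ f₂ → memIndR p f₂) ∧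
    -- kernel of j₂ is contained in the image of j₁
    (∀ f₁ f₂ : GL3Qp p → R, memIndTau p lam f₁ f₂ → f₂ = 0 → memIndR p f₁) ∧
    -- j₂ is surjective
    (∀ F : GL3Qp p → R, memIndR p F → ∃ f₁ : GL3Qp p → R, memIndTau p lam f₁ F) ∧
    -- right translation preserves I(R) and I(τ_λ) (so j₁, j₂ are equivariant)
    (∀ x : GL3Qp p, ∀ F : GL3Qp p → R, memIndR p F → memIndR p (fun g => F (g * x))) ∧
    (∀ x : GL3Qp p, ∀ f₁ f₂ : GL3Qp p → R, memIndTau p lam f₁ f₂ →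
      memIndTau p lam (fun g => f₁ (g * x)) (fun g => f₂ (g * x))) := by
  refine ⟨?_, ?_, ?_, ?_, ?_, ?_, ?_⟩
  · -- injectivity
    intro F G h
    exact congrArg Prod.fst h
  · -- j₁ lands in I(τ_λ)
    intro F hF
    refine ⟨hF.1, IsLocallyConstant.const 0, ?_⟩
    intro q hq g
    simp only [Pi.zero_apply, mul_zero, add_zero]
    exact ⟨hF.2 q hq g, trivial⟩
  · -- j₂ maps to I(R)
    intro f₁ f₂ ⟨h1, h2, h3⟩
    exact ⟨h2, fun q hq g => (h3 q hq g).2⟩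
  · -- kernel
    intro f₁ f₂ ⟨h1, h2, h3⟩ hz
    refine ⟨h1, fun q hq g => ?_⟩
    have := (h3 q hq g).1
    rw [hz] at this
    simpa using this
  · -- surjectivity
    intro F hF
    refine ⟨fun g => phiFun lam g * F g, (lc_phiFun lam hlc).mul hF.1, hF.1, ?_⟩
    intro q hq g
    refine ⟨?_, hF.2 q hq g⟩
    show phiFun lam (q * g) * F (q * g) = phiFun lam g * F g + lam (v1U p q) * F g
    rw [phiFun_cocycle lam hadd hq, hF.2 q hq g]
    ring
  · -- equivariance I(R)
    intro x F hF
    constructor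
    · exact hF.1.comp_continuous (continuous_id.mul continuous_const)
    · intro q hq g
      simp only [mul_assoc]
      exact hF.2 q hq (g * x)
  · -- equivariance I(τ_λ)
    intro x f₁ f₂ ⟨h1, h2, h3⟩
    refine ⟨h1.comp_continuous (continuous_id.mul continuous_const),
            h2.comp_continuous (continuous_id.mul continuous_const), ?_⟩
    intro q hq g
    simp only [mul_assoc]
    exact h3 q hq (g * x)
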